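/- In the planted clique model with parameters n, k, Q (n ≥ 2, 1 ≤ k ≤ n), if k ≥ 4·√(n·ln n) + 2, then with probability at least 1 − 2/n, every vertex v ∈ Q has deg(v) strictly greater than deg(u) for every vertex u ∉ Q. In particular, with this probability the k vertices of highest degree are exactly the planted clique Q. -/

import Mathlib

open MeasureTheory

namespace Stmt4

noncomputable section
open scoped Classical

variable {n : ℕ}

/-- Both endpoints of the unordered pair `p` lie in `Q`. -/
def BothInQ (Q : Finset (Fin n)) (p : Sym2 (Fin n)) : Prop := ∀ x ∈ p, x ∈ Q

/-- Index type: unordered pairs of distinct vertices not both lying in `Q`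
(the "remaining pairs", whose edge-status is random). -/
def FreePair (n : ℕ) (Q : Finset (Fin n)) : Type :=
  {p : Sym2 (Fin n) // ¬ p.IsDiag ∧ ¬ BothInQ Q p}

instance (n : ℕ) (Q : Finset (Fin n)) : Fintype (FreePair n Q) := by
  unfold FreePair; infer_instance

/-- Sample space of the planted clique model: one Boolean for each free pair. -/
def Ω (n : ℕ) (Q : Finset (Fin n)) : Type := FreePair n Q → Bool

instance (n : ℕ) (Q : Finset (Fin n)) : MeasurableSpace (Ω n Q) := MeasurableSpace.pi

/-- The Bernoulli(1/2) measure on `Bool`. -/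
def bernoulliHalf : Measure Bool := (PMF.bernoulli (1 / 2) (by norm_num)).toMeasure

instance : IsProbabilityMeasure bernoulliHalf := PMF.toMeasure.isProbabilityMeasure _

/-- The planted clique measure: each remaining pair is an edge independently w.p. 1/2. -/
def plantedClique (n : ℕ) (Q : Finset (Fin n)) : Measure (Ω n Q) :=
  Measure.pi fun _ => bernoulliHalf

/-- `u` and `v` are adjacent in the planted clique graph: they are distinct, and
either both lie in `Q` (a planted clique edge) or else the coin of the pair `{u,v}`
came up `true`. -/
def Adj (Q : Finset (Fin n)) (ω : Ω n Q) (u v : Fin n) : Prop :=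
  ∃ hne : u ≠ v,
    BothInQ Q s(u, v) ∨
      ∃ h : ¬ BothInQ Q s(u, v),
        ω ⟨s(u, v), ⟨fun hd => hne (Sym2.mk_isDiag_iff.mp hd), h⟩⟩ = true

/-- Degree of vertex `v` in the planted clique graph: its number of neighbors. -/
def deg (Q : Finset (Fin n)) (ω : Ω n Q) (v : Fin n) : ℕ :=
  (Finset.univ.filter fun u : Fin n => Adj Q ω u v).card

end

/-!
The degree of a vertex outside `Q` is a sum of `n - 1` fair coins, while the degree of a vertex
of `Q` is `k - 1` plus a sum of `n - k` fair coins; the two means differ by `(k - 1) / 2`.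
By Hoeffding's inequality, with `t = √(n log n)` each of these `n` coin sums exceeds its mean
by `t` in the unfavourable direction with probability at most `exp (-2 t² / n) = 1 / n²`.
Outside these `n` bad events every vertex of `Q` beats every other vertex, because
`k ≥ 4 t + 2` makes the gap between the means larger than `2 t`.
-/

open Finset ProbabilityTheory Real

lemma integral_bernoulliHalf (f : Bool → ℝ) :
    ∫ b, f b ∂bernoulliHalf = (f false + f true) / 2 := by
  rw [bernoulliHalf, PMF.integral_eq_sum, Fintype.sum_bool]
  norm_num [PMF.bernoulli_apply]
  ring

lemma hasSubgaussianMGF_indicator_sub_half (b : Bool) :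
    HasSubgaussianMGF (fun x : Bool => (if x = b then 1 else 0) - 2⁻¹) (1 / 4) bernoulliHalf := by
  have h := hasSubgaussianMGF_of_mem_Icc_of_integral_eq_zero (μ := bernoulliHalf)
    (X := fun x : Bool => (if x = b then (1 : ℝ) else 0) - 2⁻¹) (a := -2⁻¹) (b := 2⁻¹)
    (measurable_of_finite _).aemeasurable (ae_of_all _ fun x => by split_ifs <;> norm_num)
    (by rw [integral_bernoulliHalf]; cases b <;> norm_num)
  convert h
  ext
  norm_num

lemma measureReal_pi_bernoulliHalf_card_filter_ge_le {ι : Type*} [Fintype ι] (s : Finset ι) (b : Bool)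
    {t : ℝ} (ht : 0 ≤ t) :
    (Measure.pi fun _ : ι => bernoulliHalf).real
        {ω | (#s : ℝ) / 2 + t ≤ #{i ∈ s | ω i = b}} ≤ exp (-2 * t ^ 2 / #s) := by
  set f : Bool → ℝ := fun x => (if x = b then 1 else 0) - 2⁻¹
  have hindep : iIndepFun (fun i (ω : ι → Bool) => f (ω i)) (Measure.pi fun _ => bernoulliHalf) :=
    iIndepFun_pi (μ := fun _ => bernoulliHalf) fun _ => (measurable_of_finite f).aemeasurable
  have hsubG (i : ι) : HasSubgaussianMGF (fun ω : ι → Bool => f (ω i)) (1 / 4)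
      (Measure.pi fun _ => bernoulliHalf) := by
    refine HasSubgaussianMGF.of_map (Y := fun ω : ι → Bool => ω i) (X := f)
      (measurable_pi_apply i).aemeasurable ?_
    rw [(measurePreserving_eval (fun _ => bernoulliHalf) i).map_eq]
    exact hasSubgaussianMGF_indicator_sub_half b
  have hcount (ω : ι → Bool) : (#{i ∈ s | ω i = b} : ℝ) = #s / 2 + ∑ i ∈ s, f (ω i) := by
    simp only [f, sum_sub_distrib, sum_boole, sum_const, nsmul_eq_mul]
    ring
  have := HasSubgaussianMGF.measure_sum_ge_le_of_iIndepFun hindep (s := s) (fun i _ => hsubG i) ht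
  simp only [hcount, add_le_add_iff_left]
  convert this using 2
  push_cast [sum_const, nsmul_eq_mul]
  ring

lemma measure_pi_bernoulliHalf_card_filter_ge_le {ι : Type*} [Fintype ι] (s : Finset ι) (b : Bool)
    {t : ℝ} (ht : 0 < t) {m : ℕ} (hsm : #s ≤ m) :
    Measure.pi (fun _ : ι => bernoulliHalf) {ω | (#s : ℝ) / 2 + t ≤ #{i ∈ s | ω i = b}}
      ≤ ENNReal.ofReal (exp (-2 * t ^ 2 / m)) := by
  rcases s.eq_empty_or_nonempty with rfl | hs
  · simp [ht.not_ge]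
  rw [← ofReal_measureReal]
  refine ENNReal.ofReal_le_ofReal ((measureReal_pi_bernoulliHalf_card_filter_ge_le s b ht.le).trans ?_)
  rw [exp_le_exp, neg_mul, neg_div, neg_div, neg_le_neg_iff]
  exact div_le_div_of_nonneg_left (by positivity) (by exact_mod_cast hs.card_pos)
    (by exact_mod_cast hsm)

lemma one_sub_measure_le_of_compl_subset {α : Type*} [MeasurableSpace α] {μ : Measure α}
    [IsProbabilityMeasure μ] {A B : Set α} (h : Aᶜ ⊆ B) : 1 - μ A ≤ μ B := by
  have hsplit := measure_union_le (μ := μ) A Aᶜ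
  rw [Set.union_compl_self, measure_univ, ← tsub_le_iff_left] at hsplit
  exact hsplit.trans (measure_mono h)

section Graph

variable {n : ℕ} {Q : Finset (Fin n)}

instance : DecidablePred (BothInQ Q) := fun p => by
  unfold BothInQ; infer_instance

instance : IsProbabilityMeasure (plantedClique n Q) :=
  Measure.pi.instIsProbabilityMeasure _

-- `Ω n Q` does not unfold to a function type during instance search.
instance (ω : Ω n Q) (b : Bool) : DecidablePred (ω · = b) := fun p => instDecidableEqBool (ω p) b

lemma bothInQ_mk {w v : Fin n} : BothInQ Q s(w, v) ↔ w ∈ Q ∧ v ∈ Q := by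
  simp [BothInQ]

def FreePair.mk {w v : Fin n} (hne : w ≠ v) (h : ¬ BothInQ Q s(w, v)) : FreePair n Q :=
  ⟨s(w, v), fun hd => hne (Sym2.mk_isDiag_iff.mp hd), h⟩

noncomputable def freePairsAt (Q : Finset (Fin n)) (v : Fin n) : Finset (FreePair n Q) :=
  {p | v ∈ p.1}

noncomputable def coinsAt (ω : Ω n Q) (b : Bool) (v : Fin n) :
    Finset (FreePair n Q) :=
  {p ∈ freePairsAt Q v | ω p = b}

lemma card_filter_freePairsAt (v : Fin n) (P : FreePair n Q → Prop) [DecidablePred P] :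
    #{p ∈ freePairsAt Q v | P p} =
      #{w | ∃ (hne : w ≠ v) (h : ¬ BothInQ Q s(w, v)), P (FreePair.mk hne h)} := by
  symm
  refine card_bij (fun w hw => FreePair.mk (mem_filter.1 hw).2.fst (mem_filter.1 hw).2.snd.fst)
    (fun w hw => ?_) (fun w _ w' _ h => ?_) (fun p hp => ?_)
  · obtain ⟨hne, h, hP⟩ := (mem_filter.1 hw).2
    exact mem_filter.2 ⟨mem_filter.2 ⟨mem_univ _, Sym2.mem_mk_right w v⟩, hP⟩
  · exact Sym2.congr_left.1 (congrArg Subtype.val h)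
  · obtain ⟨hv, hP⟩ := mem_filter.1 hp
    replace hv : v ∈ p.1 := by simpa [freePairsAt] using hv
    have hp : s(Sym2.Mem.other hv, v) = p.1 := Sym2.eq_swap.trans (Sym2.other_spec hv)
    have hne : Sym2.Mem.other hv ≠ v := fun h => p.2.1 (by
      rw [← hp, h]; exact Sym2.mk_isDiag_iff.2 rfl)
    have hfree : ¬ BothInQ Q s(Sym2.Mem.other hv, v) := by rw [hp]; exact p.2.2
    have hmk : FreePair.mk hne hfree = p := Subtype.ext hp
    exact ⟨_, mem_filter.2 ⟨mem_univ _, hne, hfree, hmk.symm ▸ hP⟩, hmk⟩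

lemma deg_eq (ω : Ω n Q) (v : Fin n) :
    deg Q ω v = #{w | w ≠ v ∧ BothInQ Q s(w, v)} + #(coinsAt ω true v) := by
  rw [coinsAt, card_filter_freePairsAt, deg, ← card_union_of_disjoint]
  · congr 1
    ext w
    simp only [mem_union, mem_filter, mem_univ, true_and]
    unfold Adj FreePair.mk
    constructor
    · rintro ⟨hne, hB | ⟨h, hω⟩⟩
      exacts [Or.inl ⟨hne, hB⟩, Or.inr ⟨hne, h, hω⟩]
    · rintro (⟨hne, hB⟩ | ⟨hne, h, hω⟩)
      exacts [⟨hne, Or.inl hB⟩, ⟨hne, Or.inr ⟨h, hω⟩⟩]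
  · refine disjoint_left.2 fun w h₁ h₂ => ?_
    simp only [mem_filter] at h₁ h₂
    exact h₂.2.snd.fst h₁.2.2

lemma card_freePairsAt_add (v : Fin n) :
    #(freePairsAt Q v) + #{w | w ≠ v ∧ BothInQ Q s(w, v)} + 1 = n := by
  have h := card_filter_freePairsAt (Q := Q) v fun _ => True
  simp only [filter_true, exists_prop, and_true] at h
  rw [h, ← filter_filter, ← filter_filter, add_comm #(filter _ _), card_filter_add_card_filter_not,
    filter_ne', card_erase_add_one (mem_univ v), card_univ, Fintype.card_fin]

lemma filter_bothInQ_of_notMem {v : Fin n} (hv : v ∉ Q) :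
    ({w | w ≠ v ∧ BothInQ Q s(w, v)} : Finset (Fin n)) = ∅ := by
  simp [bothInQ_mk, hv]

lemma filter_bothInQ_of_mem {v : Fin n} (hv : v ∈ Q) :
    ({w | w ≠ v ∧ BothInQ Q s(w, v)} : Finset (Fin n)) = Q.erase v := by
  ext w
  simp [bothInQ_mk, hv]

lemma card_coinsAt_true_add_false (ω : Ω n Q) (v : Fin n) :
    #(coinsAt ω true v) + #(coinsAt ω false v) = #(freePairsAt Q v) := by
  convert card_filter_add_card_filter_not (s := freePairsAt Q v) (p := (ω · = true)) using 3 <;>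
    ext <;> simp [coinsAt]

/-- The coins counted are the edges at a vertex outside `Q` and the non-edges at a vertex of `Q`:
an excess of either is what could spoil the ordering of degrees. -/
def badEvent (Q : Finset (Fin n)) (t : ℝ) (v : Fin n) : Set (Ω n Q) :=
  {ω | (#(freePairsAt Q v) : ℝ) / 2 + t ≤ #(coinsAt ω (decide (v ∉ Q)) v)}

lemma deg_lt_deg_of_forall_notMem_badEvent {t : ℝ} (hQ : 4 * t + 1 ≤ #Q) {ω : Ω n Q}
    (hω : ∀ v, ω ∉ badEvent Q t v) {u v : Fin n} (hu : u ∉ Q) (hv : v ∈ Q) :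
    deg Q ω u < deg Q ω v := by
  have hu_few : (#(coinsAt ω true u) : ℝ) < #(freePairsAt Q u) / 2 + t := by
    simpa [badEvent, hu] using hω u
  have hv_few : (#(coinsAt ω false v) : ℝ) < #(freePairsAt Q v) / 2 + t := by
    simpa [badEvent, hv] using hω v
  have hdeg_u : deg Q ω u = #(coinsAt ω true u) := by
    rw [deg_eq, filter_bothInQ_of_notMem hu, card_empty, zero_add]
  have hdeg_v : deg Q ω v + 1 = #Q + #(coinsAt ω true v) := by
    rw [deg_eq, filter_bothInQ_of_mem hv, add_right_comm, card_erase_add_one hv]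
  have hcard_u := card_freePairsAt_add (Q := Q) u
  rw [filter_bothInQ_of_notMem hu, card_empty, add_zero] at hcard_u
  have hcard_v := card_freePairsAt_add (Q := Q) v
  rw [filter_bothInQ_of_mem hv, add_assoc, card_erase_add_one hv] at hcard_v
  have hsplit := card_coinsAt_true_add_false ω v
  rify at hdeg_u hdeg_v hcard_u hcard_v hsplit ⊢
  linarith

lemma measure_badEvent_le {t : ℝ} (ht : 0 < t) (v : Fin n) :
    plantedClique n Q (badEvent Q t v) ≤ ENNReal.ofReal (exp (-2 * t ^ 2 / n)) := by
  unfold plantedClique badEvent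
  have hcard := card_freePairsAt_add (Q := Q) v
  exact measure_pi_bernoulliHalf_card_filter_ge_le _ _ ht (by omega)

lemma measure_iUnion_badEvent_le (hn : 2 ≤ n) :
    plantedClique n Q (⋃ v, badEvent Q √(n * log n) v) ≤ ENNReal.ofReal (2 / n) := by
  have hn₀ : (0 : ℝ) < n := by positivity
  have ht : 0 < √(n * log n) := Real.sqrt_pos.2 (mul_pos hn₀ (log_pos (by exact_mod_cast hn)))
  have hexp : exp (-2 * √(n * log n) ^ 2 / n) = (n ^ 2 : ℝ)⁻¹ := by
    rw [Real.sq_sqrt (by positivity), mul_div_assoc, mul_div_cancel_left₀ _ hn₀.ne', neg_mul,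
      exp_neg, two_mul, exp_add, exp_log hn₀, sq]
  calc _ ≤ ∑ v, plantedClique n Q (badEvent Q √(n * log n) v) := measure_iUnion_fintype_le _ _
    _ ≤ ∑ _ : Fin n, ENNReal.ofReal (n ^ 2 : ℝ)⁻¹ := by
      gcongr with v; exact hexp ▸ measure_badEvent_le ht v
    _ = ENNReal.ofReal (1 / n) := by
      rw [sum_const, card_univ, Fintype.card_fin, nsmul_eq_mul, ← ENNReal.ofReal_natCast,
        ← ENNReal.ofReal_mul (by positivity), sq, mul_inv, ← mul_assoc,
        mul_inv_cancel₀ hn₀.ne', one_mul, one_div]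
    _ ≤ ENNReal.ofReal (2 / n) := by gcongr; norm_num

end Graph

theorem clique_degrees_dominate_general (n k : ℕ) (hn : 2 ≤ n)
    (Q : Finset (Fin n)) (hQ : Q.card = k)
    (hbig : 4 * Real.sqrt (n * Real.log n) + 2 ≤ (k : ℝ)) :
    1 - ENNReal.ofReal (2 / n) ≤
      plantedClique n Q {ω : Ω n Q |
        ∀ v ∈ Q, ∀ u ∉ Q, deg Q ω u < deg Q ω v} := by
  have hgood : (⋃ v, badEvent Q √(n * log n) v)ᶜ ⊆
      {ω | ∀ v ∈ Q, ∀ u ∉ Q, deg Q ω u < deg Q ω v} := fun ω hω v hv u hu =>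
    deg_lt_deg_of_forall_notMem_badEvent (by rw [hQ]; linarith) (by simpa using hω) hu hv
  exact (tsub_le_tsub_left (measure_iUnion_badEvent_le hn) 1).trans
    (one_sub_measure_le_of_compl_subset hgood)

theorem clique_degrees_dominate (n k : ℕ) (hn : 2 ≤ n) (hk1 : 1 ≤ k) (hkn : k ≤ n)
    (Q : Finset (Fin n)) (hQ : Q.card = k)
    (hbig : 4 * Real.sqrt (n * Real.log n) + 2 ≤ (k : ℝ)) :
    1 - ENNReal.ofReal (2 / n) ≤
      plantedClique n Q {ω : Ω n Q |
        ∀ v ∈ Q, ∀ u ∉ Q, deg Q ω u < deg Q ω v} :=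
  clique_degrees_dominate_general n k hn Q hQ hbig

end Stmt4
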